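/- With the flag f for the inner formula F_{[0,T_in]}φ, for every integer t ≥ 1: f(t) > 0 if and only if there exists an integer t' with max(0, t − T_in − 1) ≤ t' ≤ t − 1 such that φ(s(t')) holds. In other words, the flag is positive at time t exactly when φ held at some point of the previous T_in + 1 time steps. -/
import Mathlib


/-- Flag for the inner formula F_{[0,T_in]}φ: f(0) = 0, f(t+1) = T_in + 1 if φ(s(t)),
and f(t+1) = max(f(t) − 1, 0) otherwise (truncated subtraction on ℕ). -/
def flagF {S : Type*} (s : ℕ → S) (φ : S → Prop) [DecidablePred φ] (Tin : ℕ) : ℕ → ℕ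
  | 0 => 0
  | (t + 1) => if φ (s t) then Tin + 1 else flagF s φ Tin t - 1

lemma flagF_le {S : Type*} (s : ℕ → S) (φ : S → Prop) [DecidablePred φ] (Tin : ℕ) :
    ∀ t, flagF s φ Tin t ≤ Tin + 1 := by
  intro t
  induction t with
  | zero => simp [flagF]
  | succ t ih =>
    simp only [flagF]
    split <;> omega

lemma flagF_key {S : Type*} (s : ℕ → S) (φ : S → Prop) [DecidablePred φ] (Tin : ℕ) :
    ∀ t : ℕ, 1 ≤ t → ∀ k, k ≤ Tin →
      (k < flagF s φ Tin t ↔ ∃ t' : ℕ, t - (Tin - k) - 1 ≤ t' ∧ t' ≤ t - 1 ∧ φ (s t')) := by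
  intro t
  induction t with
  | zero => omega
  | succ t ih =>
    intro _ k hk
    rcases Nat.eq_zero_or_pos t with rfl | ht
    · simp only [flagF]
      constructor
      · intro h
        refine ⟨0, by omega, by omega, ?_⟩
        by_contra hφ
        simp [hφ, flagF] at h
      · rintro ⟨t', h1, h2, hφ⟩
        have : t' = 0 := by omega
        subst this
        simp [hφ]
        omega
    · simp only [flagF]
      by_cases hφ : φ (s t)
      · simp only [hφ, if_true]
        constructor
        · intro _
          exact ⟨t, by omega, by omega, hφ⟩
        · intro _; omega
      · simp only [hφ, if_false]
        by_cases hkT : k < Tin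
        · have := ih ht (k + 1) (by omega)
          constructor
          · intro h
            obtain ⟨t', h1, h2, hφ'⟩ := this.mp (by omega)
            exact ⟨t', by omega, by omega, hφ'⟩
          · rintro ⟨t', h1, h2, hφ'⟩
            have ht' : t' ≤ t - 1 := by
              rcases Nat.lt_or_ge t' t with h | h
              · omega
              · have : t' = t := by omega
                subst this; exact absurd hφ' hφ
            have : k + 1 < flagF s φ Tin t := this.mpr ⟨t', by omega, ht', hφ'⟩
            omega
        · have hkeq : k = Tin := by omega
          have hb := flagF_le s φ Tin t
          constructor
          · intro h; omega
          · rintro ⟨t', h1, h2, hφ'⟩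
            have : t' = t := by omega
            subst this; exact absurd hφ' hφ

theorem stmt14 {S : Type*} (s : ℕ → S) (φ : S → Prop) [DecidablePred φ] (Tin : ℕ) :
    ∀ t : ℕ, 1 ≤ t →
      (0 < flagF s φ Tin t ↔ ∃ t' : ℕ, t - Tin - 1 ≤ t' ∧ t' ≤ t - 1 ∧ φ (s t')) := by
  intro t ht
  have := flagF_key s φ Tin t ht 0 (by omega)
  simpa using this
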